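/- arXiv:1103.5356 — 10 statements merged into one kernel-verified Lean document; each statement's English description precedes it below -/
import Mathlib

section
/- Let G be a group and H a subgroup. For g ∈ G, define the one-sided quasi-normalizer condition: there exist finitely many elements g₁,…,gₙ ∈ G such that Hg ⊆ ⋃ᵢ gᵢH. Then g satisfies this condition if and only if the index [H : H ∩ gHg⁻¹] is finite. -/
/-!
The subgroup `H` acts on `G ⧸ H` by left multiplication. The image of `Hg` in `G ⧸ H` is the
orbit of `gH`, whose stabilizer in `H` is `H ∩ gHg⁻¹`. So `Hg` meets finitely many left cosets
iff this orbit is finite iff, by orbit–stabilizer, `H ∩ gHg⁻¹` has finite index in `H`.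
-/

open MulAction

namespace QuotientGroup

variable {G : Type*} [Group G] (H : Subgroup G)

theorem exists_finset_subset_biUnion_leftCoset_iff (S : Set G) :
    (∃ s : Finset G, S ⊆ ⋃ a ∈ (s : Set G), {x : G | ∃ h ∈ H, x = a * h}) ↔
      ((↑) '' S : Set (G ⧸ H)).Finite := by
  classical
  constructor
  · rintro ⟨s, hs⟩
    refine (s.finite_toSet.image ((↑) : G → G ⧸ H)).subset ?_
    rintro _ ⟨x, hx, rfl⟩
    obtain ⟨a, ha, h, hh, rfl⟩ : ∃ a ∈ (s : Set G), ∃ h ∈ H, x = a * h := by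
      simpa using hs hx
    exact ⟨a, ha, (mk_mul_of_mem a hh).symm⟩
  · intro hfin
    refine ⟨(hfin.image Quotient.out).toFinset, fun x hx => ?_⟩
    obtain ⟨h, hout⟩ := mk_out_eq_mul H x
    simp only [Set.Finite.coe_toFinset, Set.mem_iUnion, Set.mem_ofPred_eq, exists_prop]
    exact ⟨_, ⟨_, ⟨x, hx, rfl⟩, rfl⟩, h⁻¹, inv_mem h.2, by simp [hout]⟩

theorem image_rightCoset_eq_orbit (g : G) :
    ((↑) '' {x : G | ∃ h ∈ H, x = h * g} : Set (G ⧸ H)) = orbit H (g : G ⧸ H) := by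
  ext y
  constructor
  · rintro ⟨_, ⟨h, hh, rfl⟩, rfl⟩
    exact ⟨⟨h, hh⟩, rfl⟩
  · rintro ⟨⟨h, hh⟩, rfl⟩
    exact ⟨_, ⟨h, hh, rfl⟩, rfl⟩

theorem stabilizer_mk (g : G) :
    stabilizer G (g : G ⧸ H) = H.map (MulAut.conj g).toMonoidHom := by
  simpa using stabilizer_smul_eq_stabilizer_map_conj g ((1 : G) : G ⧸ H)

end QuotientGroup

theorem MulAction.finite_orbit_iff_finiteIndex_stabilizer {G X : Type*} [Group G] [MulAction G X]
    (x : X) : (orbit G x).Finite ↔ (stabilizer G x).FiniteIndex := by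
  rw [Subgroup.finiteIndex_iff_finite_quotient, ← (orbitEquivQuotientStabilizer G x).finite_iff,
    Set.finite_coe_iff]

/-- For `g ∈ G`, the one-sided quasi-normalizer condition (`Hg` is covered by finitely many
left cosets `gᵢH`) holds iff the index `[H : H ∩ gHg⁻¹]` is finite. -/
theorem stmt0 {G : Type*} [Group G] (H : Subgroup G) (g : G) :
    (∃ s : Finset G, {x : G | ∃ h ∈ H, x = h * g} ⊆
        ⋃ a ∈ (s : Set G), {x : G | ∃ h ∈ H, x = a * h}) ↔
      ((H ⊓ H.map (MulAut.conj g).toMonoidHom).subgroupOf H).FiniteIndex := by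
  have hstab :
      stabilizer H (g : G ⧸ H) = (H ⊓ H.map (MulAut.conj g).toMonoidHom).subgroupOf H := by
    rw [Subgroup.inf_subgroupOf_left, ← QuotientGroup.stabilizer_mk]
    rfl
  rw [QuotientGroup.exists_finset_subset_biUnion_leftCoset_iff,
    QuotientGroup.image_rightCoset_eq_orbit, finite_orbit_iff_finiteIndex_stabilizer, hstab]
end

section
/- Let H act on a countable set S such that every H-orbit on S is infinite. Then for every finite subset Y ⊆ S there exists h ∈ H such that h·Y ∩ Y = ∅. -/
/-!
If no `h` moved the finite set `Y` off itself, then every `h` would send some `y ∈ Y` to some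
`y' ∈ Y`, so `H` would be covered by the finitely many left cosets `{h | h • y = y'}` of the
stabilizers of points of `Y`. By B. H. Neumann's lemma one of these stabilizers has finite
index, i.e. one of the orbits is finite.
-/

open scoped Pointwise

namespace MulAction

variable {G α : Type*} [Group G] [MulAction G α]

theorem mem_smul_stabilizer_of_smul_eq {g h : G} {a : α} (hgh : g • a = h • a) :
    h ∈ g • (stabilizer G a : Set G) :=
  ⟨g⁻¹ * h, by simp [mem_stabilizer_iff, mul_smul, ← hgh], by simp⟩

theorem exists_finiteIndex_stabilizer_of_forall_exists_smul_mem (s : Finset α)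
    (hs : ∀ g : G, ∃ a ∈ s, g • a ∈ s) : ∃ a ∈ s, (stabilizer G a).FiniteIndex := by
  let rep : α × α → G := fun p => Function.invFun (· • p.1) p.2
  have hcovers : ⋃ p ∈ s ×ˢ s, rep p • (stabilizer G p.1 : Set G) = Set.univ := by
    refine Set.eq_univ_of_forall fun g => ?_
    obtain ⟨a, ha, hga⟩ := hs g
    have hrep : rep (a, g • a) • a = g • a := Function.invFun_eq (f := (· • a)) ⟨g, rfl⟩
    exact Set.mem_biUnion (Finset.mem_product.mpr ⟨ha, hga⟩) (mem_smul_stabilizer_of_smul_eq hrep)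
  obtain ⟨p, hp, hfin⟩ := Subgroup.exists_finiteIndex_of_leftCoset_cover hcovers
  exact ⟨p.1, (Finset.mem_product.mp hp).1, hfin⟩

theorem exists_smul_notMem_of_orbit_infinite (s : Finset α)
    (hs : ∀ a ∈ s, (orbit G a).Infinite) : ∃ g : G, ∀ a ∈ s, g • a ∉ s := by
  by_contra! hcon
  obtain ⟨a, ha, hfin⟩ := exists_finiteIndex_stabilizer_of_forall_exists_smul_mem s hcon
  apply hfin.index_ne_zero
  rw [index_stabilizer]
  exact (hs a ha).ncard

end MulAction

theorem stmt2_general {H S : Type*} [Group H] [MulAction H S]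
    (horb : ∀ s : S, (MulAction.orbit H s).Infinite) (Y : Finset S) :
    ∃ h : H, ∀ y ∈ Y, h • y ∉ Y :=
  MulAction.exists_smul_notMem_of_orbit_infinite Y fun y _ => horb y

/-- If a group `H` acts on a countable set `S` with all orbits infinite, then every finite
subset `Y ⊆ S` can be shifted off itself: there is `h ∈ H` with `h • Y ∩ Y = ∅`. -/
theorem stmt2 {H S : Type*} [Group H] [Countable S] [MulAction H S]
    (horb : ∀ s : S, (MulAction.orbit H s).Infinite) (Y : Finset S) :
    ∃ h : H, ∀ y ∈ Y, h • y ∉ Y :=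
  stmt2_general horb Y
end

section
/- Let H ≤ K ≤ G be groups. The following are equivalent: (1) for every finite set F ⊆ G \ K, there exists a finite set E ⊆ H such that for all h ∈ H \ E one has FhF ∩ H = ∅; (2) for all g, k ∈ G \ K the set E(g,k) = {γ ∈ H : gγk ∈ H} is finite; (3) for every g ∈ G \ K the group E(g) = gHg⁻¹ ∩ H is finite. -/
namespace Subgroup

variable {G : Type*} [Group G] (H : Subgroup G)

/-- If `γ₀` lies in `E(g,k)`, then `γ ↦ γ * γ₀⁻¹` maps `E(g,k)` into `gHg⁻¹ ∩ H`. -/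
theorem finite_setOf_mul_mul_mem_of_finite_conj {g : G} (k : G)
    (hfin : {x : G | x ∈ H ∧ g * x * g⁻¹ ∈ H}.Finite) :
    {γ : G | γ ∈ H ∧ g * γ * k ∈ H}.Finite := by
  rcases Set.eq_empty_or_nonempty {γ : G | γ ∈ H ∧ g * γ * k ∈ H} with hempty | ⟨γ₀, hγ₀H, hγ₀⟩
  · simp [hempty]
  refine (hfin.image (· * γ₀)).subset ?_
  rintro γ ⟨hγH, hγ⟩
  refine ⟨γ * γ₀⁻¹, ⟨H.mul_mem hγH (H.inv_mem hγ₀H), ?_⟩, by group⟩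
  have hquot : g * γ * k * (g * γ₀ * k)⁻¹ = g * (γ * γ₀⁻¹) * g⁻¹ := by group
  exact hquot ▸ H.mul_mem hγ (H.inv_mem hγ₀)

theorem exists_finset_forall_mul_mul_notMem (F : Finset G)
    (hF : ∀ f₁ ∈ F, ∀ f₂ ∈ F, {γ : G | γ ∈ H ∧ f₁ * γ * f₂ ∈ H}.Finite) :
    ∃ E : Finset G, (↑E ⊆ (H : Set G)) ∧
      ∀ h ∈ H, h ∉ E → ∀ f₁ ∈ F, ∀ f₂ ∈ F, f₁ * h * f₂ ∉ H := by
  have hfin : (⋃ f₁ ∈ F, ⋃ f₂ ∈ F, {γ : G | γ ∈ H ∧ f₁ * γ * f₂ ∈ H}).Finite :=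
    F.finite_toSet.biUnion fun f₁ hf₁ => F.finite_toSet.biUnion fun f₂ hf₂ => hF f₁ hf₁ f₂ hf₂
  refine ⟨hfin.toFinset, ?_, ?_⟩
  · intro x hx
    simp only [Set.Finite.coe_toFinset, Set.mem_iUnion] at hx
    obtain ⟨_, _, _, _, hxH, _⟩ := hx
    exact hxH
  · intro h hH hE f₁ hf₁ f₂ hf₂ hmem
    apply hE
    simp only [Set.Finite.mem_toFinset, Set.mem_iUnion]
    exact ⟨f₁, hf₁, f₂, hf₂, hH, hmem⟩

end Subgroup

theorem stmt4_general {G : Type*} [Group G] (H K : Subgroup G) :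
    List.TFAE
      [∀ F : Finset G, (↑F ⊆ ((K : Set G)ᶜ)) →
          ∃ E : Finset G, (↑E ⊆ (H : Set G)) ∧
            ∀ h ∈ H, h ∉ E → ∀ f₁ ∈ F, ∀ f₂ ∈ F, f₁ * h * f₂ ∉ H,
        ∀ g ∉ K, ∀ k ∉ K, {γ : G | γ ∈ H ∧ g * γ * k ∈ H}.Finite,
        ∀ g ∉ K, {x : G | x ∈ H ∧ g⁻¹ * x * g ∈ H}.Finite] := by
  classical
  tfae_have 1 → 2 := by
    intro h1 g hg k hk
    obtain ⟨E, hEH, hE⟩ := h1 {g, k} (by simp [Set.insert_subset_iff, hg, hk])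
    refine E.finite_toSet.subset fun γ ⟨hγH, hγ⟩ => ?_
    by_contra hγE
    exact hE γ hγH hγE g (by simp) k (by simp) hγ
  tfae_have 2 → 3 := fun h2 g hg => by simpa using h2 g⁻¹ (inv_mem_iff.not.mpr hg) g hg
  tfae_have 3 → 2 := fun h3 g hg k _ =>
    H.finite_setOf_mul_mul_mem_of_finite_conj k (by simpa using h3 g⁻¹ (inv_mem_iff.not.mpr hg))
  tfae_have 2 → 1 := fun h2 F hF =>
    H.exists_finset_forall_mul_mul_notMem F fun f₁ hf₁ f₂ hf₂ => h2 f₁ (hF hf₁) f₂ (hF hf₂)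
  tfae_finish

/-- Equivalent formulations of condition (ST) for a triple `H ≤ K ≤ G`:
(1) every finite `F ⊆ G \ K` admits a finite exceptional set `E ⊆ H` with `FhF ∩ H = ∅` for
`h ∈ H \ E`; (2) all sets `E(g,k) = {γ ∈ H : gγk ∈ H}` (`g,k ∉ K`) are finite;
(3) all groups `E(g) = gHg⁻¹ ∩ H` (`g ∉ K`) are finite. -/
theorem stmt4 {G : Type*} [Group G] [Countable G] (H K : Subgroup G) (hHK : H ≤ K)
    (hHinf : (H : Set G).Infinite) (hKinf : (K : Set G).Infinite) :
    List.TFAE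
      [∀ F : Finset G, (↑F ⊆ ((K : Set G)ᶜ)) →
          ∃ E : Finset G, (↑E ⊆ (H : Set G)) ∧
            ∀ h ∈ H, h ∉ E → ∀ f₁ ∈ F, ∀ f₂ ∈ F, f₁ * h * f₂ ∉ H,
        ∀ g ∉ K, ∀ k ∉ K, {γ : G | γ ∈ H ∧ g * γ * k ∈ H}.Finite,
        ∀ g ∉ K, {x : G | x ∈ H ∧ g⁻¹ * x * g ∈ H}.Finite] :=
  stmt4_general H K
end

section
/- Let H ≤ K ≤ G be groups with H infinite. Then the following are equivalent: (a) every orbit of the action of H on (G \ K)/H (by left multiplication on left cosets gH with g ∉ K) is infinite; (b) for every nonempty finite set F ⊆ G \ K, there exists h ∈ H such that FhF ∩ H = ∅. -/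
/-!
`H` acts on `G ⧸ H`, and the set of cosets `h g H` in the statement is an injective image of the
orbit of `gH`. Since `h • f₂H = f₁⁻¹H` iff `f₁ h f₂ ∈ H`, a finite `F` violating (SS) covers `H` by
the finitely many sets `{h | h • f₂H = f₁⁻¹H}`, each empty or a left coset of the stabilizer of
`f₂H`. By B. H. Neumann's lemma one of these stabilizers has finite index, so the orbit of `f₂H`
is finite. Conversely, if the orbit of `gH` is finite, then `g` together with the inverses of
representatives of the cosets in that orbit violates (SS), and avoids `K` because `H ≤ K`.
-/

open scoped Pointwise
open MulAction

namespace MulAction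

variable {M X : Type*} [Group M] [MulAction M X]

theorem setOf_smul_eq_eq_smul_stabilizer {x y : X} {a : M} (ha : a • x = y) :
    {b : M | b • x = y} = a • (stabilizer M x : Set M) := by
  ext b
  rw [Set.mem_ofPred_eq, mem_leftCoset_iff, SetLike.mem_coe, mem_stabilizer_iff, mul_smul,
    inv_smul_eq_iff, ha]

theorem finite_orbit_of_finiteIndex_stabilizer {x : X} (h : (stabilizer M x).FiniteIndex) :
    (orbit M x).Finite :=
  Set.finite_of_ncard_ne_zero (index_stabilizer M x ▸ h.index_ne_zero)

theorem exists_finite_orbit_of_forall_exists_smul_eq {S : Finset (X × X)}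
    (hS : ∀ a : M, ∃ p ∈ S, a • p.1 = p.2) : ∃ p ∈ S, (orbit M p.1).Finite := by
  classical
  let g : X × X → M := fun p => if hp : ∃ a : M, a • p.1 = p.2 then hp.choose else 1
  have hcovers : ⋃ p ∈ S, g p • (stabilizer M p.1 : Set M) = Set.univ := by
    refine Set.eq_univ_of_forall fun a => ?_
    obtain ⟨p, hpS, hp⟩ := hS a
    have hp' : ∃ a : M, a • p.1 = p.2 := ⟨a, hp⟩
    have hg : g p • p.1 = p.2 := by simpa only [g, dif_pos hp'] using hp'.choose_spec
    exact Set.mem_biUnion hpS (setOf_smul_eq_eq_smul_stabilizer hg ▸ hp)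
  obtain ⟨p, hpS, hfin⟩ := Subgroup.exists_finiteIndex_of_leftCoset_cover hcovers
  exact ⟨p, hpS, finite_orbit_of_finiteIndex_stabilizer hfin⟩

end MulAction

namespace Subgroup

variable {G : Type*} [Group G] (H : Subgroup G)

theorem smul_coe_eq_coe_iff (h : H) (a b : G) :
    h • (a : G ⧸ H) = b ↔ b⁻¹ * h * a ∈ H := by
  rw [eq_comm, show h • (a : G ⧸ H) = ((h * a : G) : G ⧸ H) from rfl, QuotientGroup.eq,
    mul_assoc]

theorem setOf_exists_mul_eq_eq_preimage (a : G) :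
    {x : G | ∃ m ∈ H, x = a * m} = QuotientGroup.mk ⁻¹' {(a : G ⧸ H)} := by
  ext x
  simp only [Set.mem_ofPred_eq, Set.mem_preimage, Set.mem_singleton_iff,
    eq_comm (a := (x : G ⧸ H)), QuotientGroup.eq]
  exact ⟨fun ⟨m, hm, hx⟩ => by simpa [hx] using hm, fun hx => ⟨a⁻¹ * x, hx, by group⟩⟩

theorem finite_setOf_cosets_iff_finite_orbit (g : G) :
    {s : Set G | ∃ h ∈ H, s = {x : G | ∃ m ∈ H, x = h * g * m}}.Finite ↔
      (orbit H (g : G ⧸ H)).Finite := by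
  have hinj : Function.Injective fun q : G ⧸ H => QuotientGroup.mk ⁻¹' {q} :=
    (Set.preimage_injective.2 QuotientGroup.mk_surjective).comp Set.singleton_injective
  have himage : {s : Set G | ∃ h ∈ H, s = {x : G | ∃ m ∈ H, x = h * g * m}} =
      (fun q : G ⧸ H => QuotientGroup.mk ⁻¹' {q}) '' orbit H (g : G ⧸ H) := by
    ext s
    simp only [Set.mem_ofPred_eq, Set.mem_image, mem_orbit_iff, setOf_exists_mul_eq_eq_preimage]
    constructor
    · rintro ⟨h, hh, rfl⟩
      exact ⟨_, ⟨⟨h, hh⟩, rfl⟩, rfl⟩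
    · rintro ⟨_, ⟨h, rfl⟩, rfl⟩
      exact ⟨h, h.2, rfl⟩
  rw [himage, Set.finite_image_iff hinj.injOn]

theorem mem_iff_of_smul_coe_eq {K : Subgroup G} (hHK : H ≤ K) {h : H} {a b : G}
    (hab : h • (a : G ⧸ H) = b) : a ∈ K ↔ b ∈ K := by
  have hmem : b⁻¹ * h * a ∈ K := hHK ((smul_coe_eq_coe_iff H h a b).1 hab)
  have hh : (h : G) ∈ K := hHK h.2
  constructor
  · intro ha
    rwa [K.mul_mem_cancel_right ha, K.mul_mem_cancel_right hh, inv_mem_iff] at hmem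
  · intro hb
    rwa [K.mul_mem_cancel_left (K.mul_mem (K.inv_mem hb) hh)] at hmem

theorem exists_finite_orbit_of_forall_mul_mem {F : Finset G}
    (hF : ∀ h ∈ H, ∃ f₁ ∈ F, ∃ f₂ ∈ F, f₁ * h * f₂ ∈ H) :
    ∃ f ∈ F, (orbit H (f : G ⧸ H)).Finite := by
  classical
  obtain ⟨p, hp, hfin⟩ := exists_finite_orbit_of_forall_exists_smul_eq (M := H)
    (S := (F ×ˢ F).image fun f => ((f.2 : G ⧸ H), ((f.1⁻¹ : G) : G ⧸ H))) fun h => by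
      obtain ⟨f₁, hf₁, f₂, hf₂, hmem⟩ := hF h h.2
      refine ⟨_, Finset.mem_image_of_mem _ (Finset.mk_mem_product hf₁ hf₂), ?_⟩
      simpa [smul_coe_eq_coe_iff] using hmem
  obtain ⟨f, hf, rfl⟩ := Finset.mem_image.1 hp
  exact ⟨f.2, (Finset.mem_product.1 hf).2, hfin⟩

theorem exists_finset_forall_mul_mem_of_finite_orbit {K : Subgroup G} (hHK : H ≤ K) {g : G}
    (hg : g ∉ K)
    (hfin : (orbit H (g : G ⧸ H)).Finite) :
    ∃ F : Finset G, F.Nonempty ∧ ↑F ⊆ (K : Set G)ᶜ ∧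
      ∀ h ∈ H, ∃ f₁ ∈ F, ∃ f₂ ∈ F, f₁ * h * f₂ ∈ H := by
  classical
  refine ⟨insert g (hfin.toFinset.image fun q => q.out⁻¹), ⟨g, Finset.mem_insert_self _ _⟩,
    ?_, ?_⟩
  · intro f hf
    rcases Finset.mem_insert.1 hf with rfl | hf
    · exact hg
    obtain ⟨q, hq, rfl⟩ := Finset.mem_image.1 hf
    obtain ⟨h, rfl⟩ := hfin.mem_toFinset.1 hq
    exact fun hK => hg ((mem_iff_of_smul_coe_eq H hHK (QuotientGroup.out_eq' _).symm).2
      (inv_mem_iff.1 hK))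
  · intro h hh
    set q := (⟨h, hh⟩ : H) • (g : G ⧸ H)
    refine ⟨q.out⁻¹, Finset.mem_insert_of_mem (Finset.mem_image_of_mem _
      (hfin.mem_toFinset.2 (mem_orbit _ _))), g, Finset.mem_insert_self _ _, ?_⟩
    simpa using (smul_coe_eq_coe_iff H ⟨h, hh⟩ g q.out).1 (QuotientGroup.out_eq' q).symm

end Subgroup

theorem stmt5_general {G : Type*} [Group G] (H K : Subgroup G) (hHK : H ≤ K) :
    (∀ g : G, g ∉ K →
        {s : Set G | ∃ h ∈ H, s = {x : G | ∃ m ∈ H, x = h * g * m}}.Infinite) ↔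
      (∀ F : Finset G, F.Nonempty → (↑F ⊆ ((K : Set G)ᶜ)) →
        ∃ h ∈ H, ∀ f₁ ∈ F, ∀ f₂ ∈ F, f₁ * h * f₂ ∉ H) := by
  constructor
  · intro ha F _ hFK
    by_contra! hb
    obtain ⟨f, hf, hfin⟩ := Subgroup.exists_finite_orbit_of_forall_mul_mem H hb
    exact ha f (hFK hf) ((Subgroup.finite_setOf_cosets_iff_finite_orbit H f).2 hfin)
  · intro hb g hg hfin
    obtain ⟨F, hF, hFK, hFH⟩ := Subgroup.exists_finset_forall_mul_mem_of_finite_orbit H hHK hg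
      ((Subgroup.finite_setOf_cosets_iff_finite_orbit H g).1 hfin)
    obtain ⟨h, hh, hFh⟩ := hb F hF hFK
    obtain ⟨f₁, hf₁, f₂, hf₂, hmem⟩ := hFH h hh
    exact hFh f₁ hf₁ f₂ hf₂ hmem

/-- For infinite `H ≤ K ≤ G`: every orbit of `H` acting by left multiplication on the left
cosets `gH ⊆ G \ K` is infinite iff condition (SS) holds: for every nonempty finite
`F ⊆ G \ K` there is `h ∈ H` with `FhF ∩ H = ∅`. -/
theorem stmt5 {G : Type*} [Group G] [Countable G] (H K : Subgroup G) (hHK : H ≤ K)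
    (hHinf : (H : Set G).Infinite) (hKinf : (K : Set G).Infinite) :
    (∀ g : G, g ∉ K →
        {s : Set G | ∃ h ∈ H, s = {x : G | ∃ m ∈ H, x = h * g * m}}.Infinite) ↔
      (∀ F : Finset G, F.Nonempty → (↑F ⊆ ((K : Set G)ᶜ)) →
        ∃ h ∈ H, ∀ f₁ ∈ F, ∀ f₂ ∈ F, f₁ * h * f₂ ∉ H) :=
  stmt5_general H K hHK
end

section
/- Let H ≤ K ≤ G be groups. Condition (SS) (for every nonempty finite F ⊆ G \ K there is h ∈ H with FhF ∩ H = ∅) holds if and only if the following condition (wSS) holds: for every nonempty finite set F ⊆ G \ K and every g ∈ G \ K, there exists h ∈ H with Fhg ∩ H = ∅. -/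
/-!
(SS) gives (wSS) by applying (SS) to `F ∪ {g}`. Conversely, if (SS) fails for `F`, then `H` is
the union of the sets `{x ∈ H | f₁ x f₂ ∈ H}` over `f₁, f₂ ∈ F`, each of which is empty or a left
coset of `H ∩ f₂ H f₂⁻¹` in `H`. By B. H. Neumann's lemma one of these subgroups, for a pair with
`f₁ h₀ f₂ ∈ H`, has finite index in `H`. If `T` is a finite set of coset representatives, then
`F' = {f₁ h₀ t⁻¹ | t ∈ T} ⊆ G \ K` violates (wSS) at `g = f₂`, because
`f₁ h₀ t⁻¹ h f₂ = (f₁ h₀ f₂) (f₂⁻¹ t⁻¹ h f₂)`.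
-/

open scoped Pointwise

namespace Subgroup

theorem exists_finset_forall_inv_mul_mem {L : Type*} [Group L] (N : Subgroup L)
    [N.FiniteIndex] : ∃ T : Finset L, ∀ x, ∃ t ∈ T, t⁻¹ * x ∈ N := by
  classical
  have := Fintype.ofFinite (L ⧸ N)
  refine ⟨Finset.univ.image Quotient.out, fun x => ⟨(x : L ⧸ N).out,
    Finset.mem_image_of_mem _ (Finset.mem_univ _), ?_⟩⟩
  rw [← QuotientGroup.eq]
  exact QuotientGroup.out_eq' _

variable {G : Type*} [Group G] (H : Subgroup G)

@[simp]
theorem mem_conj_smul_subgroupOf_iff {g : G} {x : H} :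
    x ∈ (MulAut.conj g • H).subgroupOf H ↔ g⁻¹ * x * g ∈ H := by
  simp [mem_subgroupOf, mem_pointwise_smul_iff_inv_smul_mem]

variable {H}

theorem mul_mul_mul_mem_iff {f h₀ g : G} (hfg : f * h₀ * g ∈ H) (y : G) :
    f * (h₀ * y) * g ∈ H ↔ g⁻¹ * y * g ∈ H := by
  rw [show f * (h₀ * y) * g = f * h₀ * g * (g⁻¹ * y * g) by group, H.mul_mem_cancel_left hfg]

theorem exists_finiteIndex_conj_of_forall_mul_mul_mem {F : Finset G}
    (hF : ∀ x ∈ H, ∃ f₁ ∈ F, ∃ f₂ ∈ F, f₁ * x * f₂ ∈ H) :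
    ∃ f₁ ∈ F, ∃ f₂ ∈ F, ∃ h₀ ∈ H, f₁ * h₀ * f₂ ∈ H ∧
      ((MulAut.conj f₂ • H).subgroupOf H).FiniteIndex := by
  classical
  have hw : ∀ p : G × G, ∃ w : H, (∃ x ∈ H, p.1 * x * p.2 ∈ H) → p.1 * w * p.2 ∈ H := by
    intro p
    by_cases hp : ∃ x ∈ H, p.1 * x * p.2 ∈ H
    · obtain ⟨x, hx, hpx⟩ := hp
      exact ⟨⟨x, hx⟩, fun _ => hpx⟩
    · exact ⟨1, fun h => absurd h hp⟩
  choose w hw using hw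
  have hcovers : ⋃ p ∈ (F ×ˢ F).filter (fun p => p.1 * w p * p.2 ∈ H),
      w p • ((MulAut.conj p.2 • H).subgroupOf H : Set H) = Set.univ := by
    refine Set.eq_univ_of_forall fun x => ?_
    obtain ⟨f₁, hf₁, f₂, hf₂, hx⟩ := hF x x.2
    have hwx := hw (f₁, f₂) ⟨x, x.2, hx⟩
    refine Set.mem_iUnion₂.mpr ⟨(f₁, f₂), Finset.mem_filter.mpr
      ⟨Finset.mem_product.mpr ⟨hf₁, hf₂⟩, hwx⟩, ?_⟩
    rw [mem_leftCoset_iff, SetLike.mem_coe, mem_conj_smul_subgroupOf_iff, coe_mul, coe_inv,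
      ← mul_mul_mul_mem_iff hwx, mul_inv_cancel_left]
    exact hx
  obtain ⟨⟨f₁, f₂⟩, hp, hfi⟩ := exists_finiteIndex_of_leftCoset_cover hcovers
  obtain ⟨hf, hwp⟩ := Finset.mem_filter.mp hp
  obtain ⟨hf₁, hf₂⟩ := Finset.mem_product.mp hf
  exact ⟨f₁, hf₁, f₂, hf₂, w (f₁, f₂), (w (f₁, f₂)).2, hwp, hfi⟩

theorem exists_finset_forall_mul_mul_mem_of_finiteIndex_conj {K : Subgroup G} (hHK : H ≤ K)
    {f g h₀ : G} (hf : f ∉ K) (hh₀ : h₀ ∈ H) (hfg : f * h₀ * g ∈ H)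
    [((MulAut.conj g • H).subgroupOf H).FiniteIndex] :
    ∃ F : Finset G, F.Nonempty ∧ (↑F ⊆ ((K : Set G)ᶜ)) ∧ ∀ h ∈ H, ∃ f' ∈ F, f' * h * g ∈ H := by
  classical
  obtain ⟨T, hT⟩ := exists_finset_forall_inv_mul_mem ((MulAut.conj g • H).subgroupOf H)
  refine ⟨T.image fun t : H => f * h₀ * (t : G)⁻¹, ?_, ?_, fun h hh => ?_⟩
  · obtain ⟨t, ht, -⟩ := hT 1
    exact ⟨_, Finset.mem_image_of_mem _ ht⟩
  · simp only [Finset.coe_image, Set.image_subset_iff]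
    intro t _ hK
    refine hf ?_
    simpa using K.mul_mem hK (K.mul_mem (hHK t.2) (K.inv_mem (hHK hh₀)))
  · obtain ⟨t, ht, htN⟩ := hT ⟨h, hh⟩
    refine ⟨_, Finset.mem_image_of_mem _ ht, ?_⟩
    rw [mem_conj_smul_subgroupOf_iff, coe_mul, coe_inv, ← mul_mul_mul_mem_iff hfg] at htN
    simpa only [mul_assoc] using htN

end Subgroup

theorem stmt6_general {G : Type*} [Group G] (H K : Subgroup G) (hHK : H ≤ K) :
    (∀ F : Finset G, F.Nonempty → (↑F ⊆ ((K : Set G)ᶜ)) →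
        ∃ h ∈ H, ∀ f₁ ∈ F, ∀ f₂ ∈ F, f₁ * h * f₂ ∉ H) ↔
      (∀ F : Finset G, F.Nonempty → (↑F ⊆ ((K : Set G)ᶜ)) → ∀ g : G, g ∉ K →
        ∃ h ∈ H, ∀ f ∈ F, f * h * g ∉ H) := by
  classical
  refine ⟨fun hSS F hF hFK g hg => ?_, fun hwSS F hF hFK => ?_⟩
  · obtain ⟨h, hh, hFhF⟩ := hSS (insert g F) (Finset.insert_nonempty _ _)
      (by simpa [Set.insert_subset_iff] using ⟨hg, hFK⟩)
    exact ⟨h, hh, fun f hf => hFhF f (Finset.mem_insert_of_mem hf) g (Finset.mem_insert_self _ _)⟩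
  · by_contra! hFhF
    obtain ⟨f₁, hf₁, f₂, hf₂, h₀, hh₀, hfh₀, hfi⟩ :=
      Subgroup.exists_finiteIndex_conj_of_forall_mul_mul_mem hFhF
    obtain ⟨F', hF', hF'K, hF'hg⟩ :=
      Subgroup.exists_finset_forall_mul_mul_mem_of_finiteIndex_conj hHK (hFK hf₁) hh₀ hfh₀
    obtain ⟨h, hh, hF'h⟩ := hwSS F' hF' hF'K f₂ (hFK hf₂)
    obtain ⟨f', hf', hf'h⟩ := hF'hg h hh
    exact hF'h f' hf' hf'h

/-- Condition (SS) is equivalent to the apparently weaker condition (wSS): for every nonempty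
finite `F ⊆ G \ K` and every `g ∈ G \ K` there is `h ∈ H` with `Fhg ∩ H = ∅`. -/
theorem stmt6 {G : Type*} [Group G] [Countable G] (H K : Subgroup G) (hHK : H ≤ K)
    (hHinf : (H : Set G).Infinite) (hKinf : (K : Set G).Infinite) :
    (∀ F : Finset G, F.Nonempty → (↑F ⊆ ((K : Set G)ᶜ)) →
        ∃ h ∈ H, ∀ f₁ ∈ F, ∀ f₂ ∈ F, f₁ * h * f₂ ∉ H) ↔
      (∀ F : Finset G, F.Nonempty → (↑F ⊆ ((K : Set G)ᶜ)) → ∀ g : G, g ∉ K →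
        ∃ h ∈ H, ∀ f ∈ F, f * h * g ∉ H) :=
  stmt6_general H K hHK
end

section
/- Let K be a group acting by automorphisms α on a group A, let H ⊴ K be a normal subgroup of K, and form G = A ⋊ K. Identify K with {e} × K ≤ G. If e is the only element a ∈ A fixed by α_h for all h ∈ H, then the normalizer of H in G equals K: N_G(H) = K. -/
/-!
Conjugation by `k ∈ K` preserves `H` because `H ⊴ K`, so `K ≤ N_G(H)`. Conversely, writing
`g = a k`, also `a ∈ N_G(H)`; since `a h a⁻¹ = (a · φ_h(a)⁻¹) h` for `h ∈ H`, normalizing `H`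
forces `φ_h(a) = a` for all `h ∈ H`, hence `a = e`.
-/

namespace SemidirectProduct

variable {N G : Type*} [Group N] [Group G] {φ : G →* MulAut N}

theorem left_inl_mul_inr_mul_inv_inl (a : N) (g : G) :
    (inl a * inr g * (inl a)⁻¹ : N ⋊[φ] G).left = a * (φ g a)⁻¹ := by
  simp [mul_left, inv_left]

theorem range_inr_le_normalizer_map_inr (H : Subgroup G) [H.Normal] :
    (inr : G →* N ⋊[φ] G).range ≤
      Subgroup.normalizer ((H.map inr : Subgroup (N ⋊[φ] G)) : Set (N ⋊[φ] G)) := by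
  rw [MonoidHom.range_eq_map, ← H.normalizer_eq_top]
  exact Subgroup.le_normalizer_map inr

theorem apply_eq_of_inl_mem_normalizer_map_inr {H : Subgroup G} {a : N}
    (ha : inl a ∈ Subgroup.normalizer ((H.map inr : Subgroup (N ⋊[φ] G)) : Set (N ⋊[φ] G)))
    {h : G} (hh : h ∈ H) :
    φ h a = a := by
  obtain ⟨h', -, hconj⟩ :=
    (Subgroup.mem_normalizer_iff.mp ha (inr h)).mp (Subgroup.mem_map_of_mem _ hh)
  have hleft := congrArg left hconj
  rw [left_inl_mul_inr_mul_inv_inl, left_inr] at hleft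
  exact (mul_inv_eq_one.mp hleft.symm).symm

end SemidirectProduct

open SemidirectProduct in
/-- If `H ⊴ K`, `K` acts on `A` by automorphisms `φ`, `G = A ⋊[φ] K`, and the identity is the
only element of `A` fixed by every `φ h`, `h ∈ H`, then `N_G(H) = K`. -/
theorem stmt8 {A K : Type*} [Group A] [Group K] (φ : K →* MulAut A)
    (H : Subgroup K) (hH : H.Normal)
    (hfix : ∀ a : A, (∀ h ∈ H, φ h a = a) → a = 1) :
    Subgroup.normalizer ((H.map (SemidirectProduct.inr : K →* A ⋊[φ] K)) : Set (A ⋊[φ] K)) =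
      (SemidirectProduct.inr : K →* A ⋊[φ] K).range := by
  refine le_antisymm (fun g hg => ?_) (range_inr_le_normalizer_map_inr H)
  have hk := range_inr_le_normalizer_map_inr (φ := φ) H ⟨g.right, rfl⟩
  rw [← inl_left_mul_inr_right g] at hg
  have ha := (Subgroup.mul_mem_cancel_right _ hk).mp hg
  have hleft : g.left = 1 :=
    hfix g.left fun h hh => apply_eq_of_inl_mem_normalizer_map_inr ha hh
  exact ⟨g.right, by ext <;> simp [hleft]⟩
end

section
/- Let G = A ⋊_α K with H ≤ K ≤ G as above. Then for every g ∈ G \ K the subgroup H ∩ gHg⁻¹ is finite if and only if for every a ∈ A with a ≠ e, the stabilizer {h ∈ H : α_h(a) = a} is finite. -/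
/-!
Write `g = (a, k)`. An element `(1, h)` of `H` conjugates by `g` into `K` exactly when
`a⁻¹ · α_h(a) = 1`, i.e. when `h` fixes `a`; so `H ∩ gHg⁻¹` embeds into the stabilizer of `a`
in `H`, and `g ∉ K` means `a ≠ e`. For `g = (a, e)` the embedding is onto, which gives the
converse.
-/

namespace SemidirectProduct

variable {N G : Type*} [Group N] [Group G] {φ : G →* MulAut N}

theorem mem_range_inr_iff {x : N ⋊[φ] G} : x ∈ (inr : G →* N ⋊[φ] G).range ↔ x.left = 1 :=
  ⟨by rintro ⟨g, rfl⟩; rfl, fun h => ⟨x.right, by ext <;> simp [h]⟩⟩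

theorem mem_map_inr_iff {H : Subgroup G} {x : N ⋊[φ] G} :
    x ∈ H.map (inr : G →* N ⋊[φ] G) ↔ x.left = 1 ∧ x.right ∈ H :=
  ⟨by rintro ⟨g, hg, rfl⟩; exact ⟨rfl, hg⟩, fun ⟨h1, h2⟩ => ⟨x.right, h2, by ext <;> simp [h1]⟩⟩

theorem left_inv_mul_inr_mul (x : N ⋊[φ] G) (g : G) :
    (x⁻¹ * inr g * x).left = φ x.right⁻¹ (x.left⁻¹ * φ g x.left) := by
  simp [MulAut.mul_apply]

theorem left_inv_mul_inr_mul_eq_one_iff {x : N ⋊[φ] G} {g : G} :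
    (x⁻¹ * inr g * x).left = 1 ↔ φ g x.left = x.left := by
  rw [left_inv_mul_inr_mul, map_eq_one_iff _ (MulEquiv.injective _), inv_mul_eq_one, eq_comm]

theorem setOf_mem_map_inr_and_conj_subset_image (H : Subgroup G) (x : N ⋊[φ] G) :
    {y : N ⋊[φ] G | y ∈ H.map inr ∧ x⁻¹ * y * x ∈ H.map inr} ⊆
      inr '' {g : G | g ∈ H ∧ φ g x.left = x.left} := by
  rintro _ ⟨⟨g, hg, rfl⟩, hconj⟩
  exact ⟨g, ⟨hg, left_inv_mul_inr_mul_eq_one_iff.mp (mem_map_inr_iff.mp hconj).1⟩, rfl⟩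

theorem preimage_inr_setOf_mem_map_inr_and_conj_inl (H : Subgroup G) (n : N) :
    inr ⁻¹' {y : N ⋊[φ] G | y ∈ H.map inr ∧ (inl n)⁻¹ * y * inl n ∈ H.map inr} =
      {g : G | g ∈ H ∧ φ g n = n} := by
  ext g
  simp only [Set.mem_preimage, Set.mem_ofPred_eq, mem_map_inr_iff,
    left_inv_mul_inr_mul_eq_one_iff]
  simp +contextual

end SemidirectProduct

open SemidirectProduct

/-- In `G = A ⋊[φ] K` with `H ≤ K`: the groups `H ∩ gHg⁻¹` are finite for all `g ∈ G \ K`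
iff every `a ∈ A \ {e}` has finite stabilizer `{h ∈ H : φ h a = a}`. -/
theorem stmt9 {A K : Type*} [Group A] [Group K] (φ : K →* MulAut A) (H : Subgroup K) :
    (∀ g : A ⋊[φ] K, g ∉ (SemidirectProduct.inr : K →* A ⋊[φ] K).range →
        {x : A ⋊[φ] K | x ∈ H.map (SemidirectProduct.inr : K →* A ⋊[φ] K) ∧
          g⁻¹ * x * g ∈ H.map (SemidirectProduct.inr : K →* A ⋊[φ] K)}.Finite) ↔
      (∀ a : A, a ≠ 1 → {h : K | h ∈ H ∧ φ h a = a}.Finite) := by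
  constructor
  · intro hfin a ha
    have ha_notMem : inl a ∉ (inr : K →* A ⋊[φ] K).range := mem_range_inr_iff.not.mpr ha
    rw [← preimage_inr_setOf_mem_map_inr_and_conj_inl]
    exact (hfin _ ha_notMem).preimage inr_injective.injOn
  · intro hfin g hg
    have hg_left : g.left ≠ 1 := mem_range_inr_iff.not.mp hg
    exact ((hfin _ hg_left).image inr).subset (setOf_mem_map_inr_and_conj_subset_image H g)
end

section
/- Let G = A ⋊_α K with H ≤ K. The triple H ≤ K ≤ G satisfies condition (SS) (for every nonempty finite F ⊆ G \ K there exists h ∈ H with FhF ∩ H = ∅, identifying H with {e}×H) if and only if for every finite subset E ⊆ A \ {e} there exists h ∈ H with E ∩ α_h(E) = ∅. -/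
/-!
The `A`-component of `f₁ · h · f₂` is trivial exactly when `α_h (f₂.left) = (f₁⁻¹).left`, so
(SS) for a finite `F ⊆ G \ K` follows from the disjointness condition for the finite set
`{f.left, (f⁻¹).left | f ∈ F} ⊆ A \ {e}`. Conversely, for `a ∈ A` we have
`α_h(a)⁻¹ · h · a = h ∈ H`, so (SS) for `E ∪ E⁻¹ ⊆ A ≤ G` forbids `α_h(a) ∈ E` for `a ∈ E`.
-/

open scoped Pointwise

namespace SemidirectProduct

variable {A K : Type*} [Group A] [Group K] {φ : K →* MulAut A} {H : Subgroup K}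

theorem mem_map_inr_iff_s10 {g : A ⋊[φ] K} :
    g ∈ H.map (inr : K →* A ⋊[φ] K) ↔ g.left = 1 ∧ g.right ∈ H := by
  constructor
  · rintro ⟨k, hk, rfl⟩
    exact ⟨rfl, hk⟩
  · rintro ⟨hleft, hright⟩
    exact ⟨g.right, hright, by ext <;> simp [hleft]⟩

theorem mem_range_inr_iff_s10 {g : A ⋊[φ] K} : g ∈ (inr : K →* A ⋊[φ] K).range ↔ g.left = 1 := by
  rw [MonoidHom.range_eq_map, mem_map_inr_iff_s10]
  simp

theorem inv_left_eq_one_iff {g : A ⋊[φ] K} : g⁻¹.left = 1 ↔ g.left = 1 := by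
  simp [inv_left]

theorem left_mul_inr_mul_eq_one_iff (f₁ f₂ : A ⋊[φ] K) (h : K) :
    (f₁ * inr h * f₂).left = 1 ↔ φ h f₂.left = f₁⁻¹.left := by
  have hleft : (f₁ * inr h * f₂).left = f₁.left * φ f₁.right (φ h f₂.left) := by
    simp [mul_left, map_mul]
  rw [hleft, mul_eq_one_iff_eq_inv', inv_left, map_inv φ, MulAut.inv_apply,
    MulEquiv.eq_symm_apply]

theorem inl_inv_mul_inr_mul_inl (h : K) (a : A) :
    (inl (φ h a)⁻¹ : A ⋊[φ] K) * inr h * inl a = inr h := by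
  ext <;> simp

variable (φ H)

/-- Condition (SS) for the triple `H ≤ K ≤ A ⋊[φ] K`. -/
def SSCondition : Prop :=
  ∀ F : Finset (A ⋊[φ] K), F.Nonempty → (∀ f ∈ F, f ∉ (inr : K →* A ⋊[φ] K).range) →
    ∃ h ∈ H, ∀ f₁ ∈ F, ∀ f₂ ∈ F, f₁ * inr h * f₂ ∉ H.map (inr : K →* A ⋊[φ] K)

def DisplacesFinsets : Prop :=
  ∀ E : Finset A, (↑E ⊆ {a : A | a ≠ 1}) → ∃ h ∈ H, ∀ a ∈ E, φ h a ∉ E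

variable {φ H}

theorem SSCondition.displacesFinsets (hSS : SSCondition φ H) : DisplacesFinsets φ H := by
  classical
  intro E hE
  rcases E.eq_empty_or_nonempty with rfl | hEne
  · exact ⟨1, H.one_mem, by simp⟩
  have hsymm : ∀ x ∈ E ∪ E⁻¹, x ≠ 1 := by
    intro x hx
    rcases Finset.mem_union.1 hx with hx | hx
    · exact hE hx
    · simpa using hE (Finset.mem_inv'.1 hx)
  have hF : ∀ f ∈ (E ∪ E⁻¹).image inl, f ∉ (inr : K →* A ⋊[φ] K).range := by
    intro f hf
    obtain ⟨x, hx, rfl⟩ := Finset.mem_image.1 hf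
    rw [mem_range_inr_iff_s10, left_inl]
    exact hsymm x hx
  obtain ⟨h, hh, hdisj⟩ := hSS _ ((hEne.mono Finset.subset_union_left).image _) hF
  refine ⟨h, hh, fun a ha hha => hdisj (inl (φ h a)⁻¹) ?_ (inl a) ?_ ?_⟩
  · exact Finset.mem_image_of_mem _ (Finset.mem_union_right _ (Finset.inv_mem_inv hha))
  · exact Finset.mem_image_of_mem _ (Finset.mem_union_left _ ha)
  · rw [inl_inv_mul_inr_mul_inl]
    exact ⟨h, hh, rfl⟩

theorem DisplacesFinsets.ssCondition (hD : DisplacesFinsets φ H) : SSCondition φ H := by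
  classical
  intro F _ hF
  have hE : ↑((F ∪ F⁻¹).image left) ⊆ {a : A | a ≠ 1} := by
    intro x hx
    obtain ⟨f, hf, rfl⟩ := Finset.mem_image.1 hx
    rcases Finset.mem_union.1 hf with hf | hf
    · exact fun h1 => hF f hf (mem_range_inr_iff_s10.2 h1)
    · exact fun h1 => hF _ (Finset.mem_inv'.1 hf) (mem_range_inr_iff_s10.2 (inv_left_eq_one_iff.2 h1))
  obtain ⟨h, hh, hdisj⟩ := hD _ hE
  refine ⟨h, hh, fun f₁ h₁ f₂ h₂ hmem => ?_⟩
  apply hdisj f₂.left (Finset.mem_image_of_mem _ (Finset.mem_union_left _ h₂))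
  rw [(left_mul_inr_mul_eq_one_iff f₁ f₂ h).1 (mem_map_inr_iff_s10.1 hmem).1]
  exact Finset.mem_image_of_mem _ (Finset.mem_union_right _ (Finset.inv_mem_inv h₁))

end SemidirectProduct

/-- In `G = A ⋊[φ] K` with `H ≤ K`: the triple `H ≤ K ≤ G` satisfies condition (SS) iff for
every finite `E ⊆ A \ {e}` there is `h ∈ H` with `E ∩ φ h (E) = ∅`. -/
theorem stmt10 {A K : Type*} [Group A] [Group K] (φ : K →* MulAut A) (H : Subgroup K) :
    (∀ F : Finset (A ⋊[φ] K), F.Nonempty →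
        (∀ f ∈ F, f ∉ (SemidirectProduct.inr : K →* A ⋊[φ] K).range) →
        ∃ h ∈ H, ∀ f₁ ∈ F, ∀ f₂ ∈ F,
          f₁ * SemidirectProduct.inr h * f₂ ∉
            H.map (SemidirectProduct.inr : K →* A ⋊[φ] K)) ↔
      (∀ E : Finset A, (↑E ⊆ {a : A | a ≠ 1}) → ∃ h ∈ H, ∀ a ∈ E, φ h a ∉ E) :=
  ⟨SemidirectProduct.SSCondition.displacesFinsets, SemidirectProduct.DisplacesFinsets.ssCondition⟩
end

section
/- Let K act on a group A by automorphisms α and let H ≤ K. Then the following are equivalent: (i) for every finite set E ⊆ A \ {e} there exists h ∈ H with E ∩ α_h(E) = ∅; (ii) for every a ∈ A \ {e}, the H-orbit {α_h(a) : h ∈ H} is infinite. -/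
/-!
If every orbit met by a finite set `E` is infinite, then no finite union of the sets
`{g | g • x = y}` with `x, y ∈ E` can be the whole group: each of them is empty or a left coset
of the stabilizer of `x`, which has infinite index, and B. H. Neumann's lemma says that a group
covered by finitely many cosets has one of the subgroups of finite index. Conversely, a finite
orbit inside `A \ {e}` is a finite set that every element maps into itself.
-/

open scoped Pointwise

namespace MulAction

variable {G X : Type*} [Group G] [MulAction G X]

theorem finite_orbit_iff_finiteIndex_stabilizer_s11 (x : X) :
    (orbit G x).Finite ↔ (stabilizer G x).FiniteIndex := by
  rw [Subgroup.finiteIndex_iff_finite_quotient, ← (orbitEquivQuotientStabilizer G x).finite_iff,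
    Set.finite_coe_iff]

theorem mem_smul_stabilizer_of_smul_eq_s11 {g₀ g : G} {x y : X} (h₀ : g₀ • x = y)
    (h : g • x = y) :
    g ∈ g₀ • (stabilizer G x : Set G) := by
  rw [mem_leftCoset_iff, SetLike.mem_coe, mem_stabilizer_iff, mul_smul, inv_smul_eq_iff, h, h₀]

theorem exists_smul_notMem_of_infinite_orbit {E : Finset X}
    (hE : ∀ x ∈ E, (orbit G x).Infinite) : ∃ g : G, ∀ x ∈ E, g • x ∉ E := by
  by_contra! hmeet
  let transporter : X × X → G := fun p => Classical.epsilon (fun g : G => g • p.1 = p.2)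
  have hcover : ⋃ p ∈ E ×ˢ E, transporter p • (stabilizer G p.1 : Set G) = Set.univ := by
    refine Set.eq_univ_of_forall fun g => ?_
    obtain ⟨x, hx, hgx⟩ := hmeet g
    refine Set.mem_biUnion (x := (x, g • x)) (Finset.mem_product.2 ⟨hx, hgx⟩) ?_
    have htransport : transporter (x, g • x) • x = g • x :=
      Classical.epsilon_spec (p := fun g' : G => g' • x = g • x) ⟨g, rfl⟩
    exact mem_smul_stabilizer_of_smul_eq_s11 htransport rfl
  obtain ⟨p, hp, hfinite⟩ := Subgroup.exists_finiteIndex_of_leftCoset_cover hcover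
  exact hE p.1 (Finset.mem_product.1 hp).1
    ((finite_orbit_iff_finiteIndex_stabilizer_s11 p.1).2 hfinite)

theorem forall_exists_smul_notMem_iff_infinite_orbit {S : Set X}
    (hS : ∀ g : G, ∀ x ∈ S, g • x ∈ S) :
    (∀ E : Finset X, ↑E ⊆ S → ∃ g : G, ∀ x ∈ E, g • x ∉ E) ↔
      ∀ x ∈ S, (orbit G x).Infinite := by
  refine ⟨fun hdisplace x hx hfinite => ?_, fun horbit E hE =>
    exists_smul_notMem_of_infinite_orbit fun x hx => horbit x (hE hx)⟩
  obtain ⟨g, hg⟩ := hdisplace hfinite.toFinset (by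
    rw [Set.Finite.coe_toFinset]
    rintro _ ⟨h, rfl⟩
    exact hS h x hx)
  exact hg x (by simp [mem_orbit_self]) (by simp [mem_orbit])

end MulAction

/-- For `K` acting on `A` by automorphisms and `H ≤ K`: every finite `E ⊆ A \ {e}` can be
shifted off itself by some `φ h`, `h ∈ H`, iff every `a ∈ A \ {e}` has infinite `H`-orbit. -/
theorem stmt11 {A K : Type*} [Group A] [Group K] (φ : K →* MulAut A) (H : Subgroup K) :
    (∀ E : Finset A, (↑E ⊆ {a : A | a ≠ 1}) → ∃ h ∈ H, ∀ a ∈ E, φ h a ∉ E) ↔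
      (∀ a : A, a ≠ 1 → {b : A | ∃ h ∈ H, b = φ h a}.Infinite) := by
  have horbit (a : A) : {b : A | ∃ h ∈ H, b = φ h a} = MulAction.orbit (H.map φ) a := by
    ext b
    simp [MulAction.mem_orbit_iff, eq_comm]
  have hmove (E : Finset A) :
      (∃ h ∈ H, ∀ a ∈ E, φ h a ∉ E) ↔ ∃ m : H.map φ, ∀ a ∈ E, m • a ∉ E := by
    simp
  simp only [hmove, horbit]
  exact MulAction.forall_exists_smul_notMem_iff_infinite_orbit fun m a ha =>
    (map_ne_one_iff (m : MulAut A) (MulEquiv.injective _)).2 ha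
end

section
/- Let K act on a countable set X, let Z be a nontrivial group, let A = Z^(X) be the group of finitely supported functions X → Z with pointwise multiplication, and let K act on A by (k·a)(x) = a(k⁻¹·x). Let H ≤ K. Then every non-identity element a ∈ A has finite stabilizer {h ∈ H : h·a = a} if and only if for every x ∈ X the stabilizer H_x = {h ∈ H : h·x = x} is finite. -/
/-!
If `h` fixes `a ≠ 0` and `a x ≠ 0`, then `h • x` again lies in the finite support of `a`, so the
stabilizer of `a` in `H` is covered by finitely many sets `{h ∈ H | h • x = y}`, each empty or a
left translate of `H_x`. Conversely `H_x` fixes `single x z` for any `z ≠ 0`.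
-/

open Finsupp MulAction

section Transporter

variable {K X : Type*} [Group K] [MulAction K X]

lemma transporter_subset_image_stabilizer (H : Subgroup K) {x y : X} {g : K} (hg : g ∈ H)
    (hgx : g • x = y) :
    {h : K | h ∈ H ∧ h • x = y} ⊆ (g * ·) '' {h : K | h ∈ H ∧ h • x = x} := by
  rintro h ⟨hh, hhx⟩
  refine ⟨g⁻¹ * h, ⟨H.mul_mem (H.inv_mem hg) hh, ?_⟩, mul_inv_cancel_left g h⟩
  rw [mul_smul, hhx, ← hgx, inv_smul_smul]

lemma finite_transporter_of_finite_stabilizer (H : Subgroup K) {x : X}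
    (hx : {h : K | h ∈ H ∧ h • x = x}.Finite) (y : X) :
    {h : K | h ∈ H ∧ h • x = y}.Finite := by
  rcases Set.eq_empty_or_nonempty {h : K | h ∈ H ∧ h • x = y} with hempty | ⟨g, hg, hgx⟩
  · simp [hempty]
  · exact (hx.image _).subset (transporter_subset_image_stabilizer H hg hgx)

end Transporter

section Shift

variable {K X Z : Type*} [Group K] [MulAction K X] [AddGroup Z]

@[simp]
lemma equivMapDomain_toPerm_single (h : K) (x : X) (z : Z) :
    equivMapDomain (toPerm h) (single x z) = single (h • x) z := by
  simp [equivMapDomain_single]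

@[simp]
lemma equivMapDomain_toPerm_apply_smul (h : K) (a : X →₀ Z) (x : X) :
    equivMapDomain (toPerm h) a (h • x) = a x := by
  simp [equivMapDomain_apply]

lemma stabilizer_subset_stabilizer_single (H : Subgroup K) (x : X) (z : Z) :
    {h : K | h ∈ H ∧ h • x = x} ⊆
      {h : K | h ∈ H ∧ equivMapDomain (toPerm h) (single x z) = single x z} := by
  rintro h ⟨hh, hhx⟩
  exact ⟨hh, by rw [equivMapDomain_toPerm_single, hhx]⟩

lemma stabilizer_subset_biUnion_transporter (H : Subgroup K) {a : X →₀ Z} {x : X}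
    (hx : a x ≠ 0) :
    {h : K | h ∈ H ∧ equivMapDomain (toPerm h) a = a} ⊆
      ⋃ y ∈ (a.support : Set X), {h : K | h ∈ H ∧ h • x = y} := by
  rintro h ⟨hh, hha⟩
  have hhx : a (h • x) ≠ 0 := by
    rwa [← hha, equivMapDomain_toPerm_apply_smul]
  exact Set.mem_biUnion (mem_support_iff.mpr hhx) ⟨hh, rfl⟩

end Shift

theorem stmt12_general {K X Z : Type*} [Group K] [MulAction K X]
    [AddGroup Z] [Nontrivial Z] (H : Subgroup K) :
    (∀ a : X →₀ Z, a ≠ 0 →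
        {h : K | h ∈ H ∧ Finsupp.equivMapDomain (MulAction.toPerm h) a = a}.Finite) ↔
      (∀ x : X, {h : K | h ∈ H ∧ h • x = x}.Finite) := by
  constructor
  · intro hA x
    obtain ⟨z, hz⟩ := exists_ne (0 : Z)
    exact (hA (single x z) (single_ne_zero.mpr hz)).subset
      (stabilizer_subset_stabilizer_single H x z)
  · intro hX a ha
    obtain ⟨x, hx⟩ : ∃ x, a x ≠ 0 := by
      simpa [Finsupp.ext_iff] using ha
    exact (a.support.finite_toSet.biUnion fun y _ ↦
      finite_transporter_of_finite_stabilizer H (hX x) y).subset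
        (stabilizer_subset_biUnion_transporter H hx)

/-- Let `K` act on a countable set `X`, `Z` a nontrivial (additively written) group,
`A = Z^(X)` the finitely supported functions with the shift action
`(h • a) x = a (h⁻¹ • x)`, and `H ≤ K`. Every nonzero `a ∈ A` has finite stabilizer in `H`
iff every point stabilizer `H_x` is finite. -/
theorem stmt12 {K X Z : Type*} [Group K] [Countable X] [MulAction K X]
    [AddGroup Z] [Nontrivial Z] (H : Subgroup K) :
    (∀ a : X →₀ Z, a ≠ 0 →
        {h : K | h ∈ H ∧ Finsupp.equivMapDomain (MulAction.toPerm h) a = a}.Finite) ↔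
      (∀ x : X, {h : K | h ∈ H ∧ h • x = x}.Finite) :=
  stmt12_general H
end
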